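/- arXiv:2212.11588 — 2 statements merged into one kernel-verified Lean document; each statement's English description precedes it below -/
import Mathlib

section
/- If w and w' are two reduced expressions of the same element w of a Coxeter group such that w can be obtained from w' using only commutation relations, then the corresponding labeled heaps H(w) and H(w') are isomorphic as labeled posets. -/
/-- A single commutation move: swap two adjacent letters `a b` with `M a b = 2`. -/
def CommMove {B : Type*} (M : CoxeterMatrix B) (l l' : List B) : Prop :=
  ∃ (u v : List B) (a b : B), M a b = 2 ∧ l = u ++ a :: b :: v ∧ l' = u ++ b :: a :: v

/-- Commutation equivalence of words. -/
def CommEquiv {B : Type*} (M : CoxeterMatrix B) : List B → List B → Prop :=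
  Relation.ReflTransGen (CommMove M)

/-- The covering relation generating the heap order of the word `l`:
`i ≺ j` if `i < j` and the letters in positions `i` and `j` do not commute
(`M (l i) (l j) ≠ 2`, which includes equal letters). The heap order is its
transitive closure `Relation.TransGen (heapRel M l)`. -/
def heapRel {B : Type*} (M : CoxeterMatrix B) (l : List B)
    (i j : Fin l.length) : Prop :=
  i < j ∧ M (l.get i) (l.get j) ≠ 2

private lemma commMove_iso {B : Type*} (M : CoxeterMatrix B) (l l' : List B)
    (h : CommMove M l l') :
    ∃ e : Fin l.length ≃ Fin l'.length,
      (∀ i, l.get i = l'.get (e i)) ∧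
      (∀ i j, heapRel M l i j ↔ heapRel M l' (e i) (e j)) := by
  obtain ⟨u, v, a, b, hab, hl, hl'⟩ := h
  subst hl hl'
  set f : ℕ → ℕ := fun n => if n = u.length then u.length + 1
    else if n = u.length + 1 then u.length else n with hf
  have hff : ∀ n, f (f n) = n := by
    intro n; simp only [hf]; split_ifs <;> omega
  have hb1 : ∀ n, n < (u ++ a :: b :: v).length → f n < (u ++ b :: a :: v).length := by
    intro n hn
    simp only [List.length_append, List.length_cons] at hn ⊢
    simp only [hf]; split_ifs <;> omega
  have hb2 : ∀ n, n < (u ++ b :: a :: v).length → f n < (u ++ a :: b :: v).length := by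
    intro n hn
    simp only [List.length_append, List.length_cons] at hn ⊢
    simp only [hf]; split_ifs <;> omega
  have hlk : u.length + 1 < (u ++ a :: b :: v).length := by
    simp only [List.length_append, List.length_cons]; omega
  have hlk' : u.length + 1 < (u ++ b :: a :: v).length := by
    simp only [List.length_append, List.length_cons]; omega
  have hgeta : (u ++ a :: b :: v)[u.length]'(by omega) = a := by
    rw [List.getElem_append_right (by omega)]; simp
  have hgetb : (u ++ a :: b :: v)[u.length + 1]'hlk = b := by
    rw [List.getElem_append_right (by omega)]; simp
  have hgetb' : (u ++ b :: a :: v)[u.length]'(by omega) = b := by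
    rw [List.getElem_append_right (by omega)]; simp
  have hgeta' : (u ++ b :: a :: v)[u.length + 1]'hlk' = a := by
    rw [List.getElem_append_right (by omega)]; simp
  have hsame : ∀ n (hn : n < (u ++ a :: b :: v).length), n ≠ u.length → n ≠ u.length + 1 →
      (u ++ a :: b :: v)[n] = (u ++ b :: a :: v)[n]'(by simpa using hn) := by
    intro n hn h1 h2
    rcases lt_or_ge n u.length with hnk | hnk
    · rw [List.getElem_append_left (by omega), List.getElem_append_left (by omega)]
    · rw [List.getElem_append_right (by omega), List.getElem_append_right (by omega)]
      obtain ⟨m, hm⟩ : ∃ m, n - u.length = m + 2 := ⟨n - u.length - 2, by omega⟩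
      simp [hm]
  have hfk : ∀ m, f m = u.length → m = u.length + 1 := by
    intro m; simp only [hf]; split_ifs <;> omega
  have hfk1 : ∀ m, f m = u.length + 1 → m = u.length := by
    intro m; simp only [hf]; split_ifs <;> omega
  have key : ∀ m n : ℕ, m < n → ¬(m = u.length ∧ n = u.length + 1) → f m < f n := by
    intro m n h1 h2
    simp only [hf]; split_ifs <;> omega
  have hfa : f u.length = u.length + 1 := by simp [hf]
  have hfb' : f (u.length + 1) = u.length := by simp [hf]
  have hlab : ∀ (i : Fin (u ++ a :: b :: v).length),
      (u ++ a :: b :: v).get i = (u ++ b :: a :: v).get ⟨f i.1, hb1 i.1 i.2⟩ := by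
    intro i
    simp only [List.get_eq_getElem]
    by_cases h1 : i.1 = u.length
    · simp only [h1, hfa]
      rw [hgeta, hgeta']
    · by_cases h2 : i.1 = u.length + 1
      · simp only [h2, hfb']
        rw [hgetb, hgetb']
      · have hfi : f i.1 = i.1 := by simp [hf, h1, h2]
        simp only [hfi]
        exact hsame i.1 i.2 h1 h2
  refine ⟨⟨fun i => ⟨f i.1, hb1 i.1 i.2⟩, fun j => ⟨f j.1, hb2 j.1 j.2⟩,
    fun i => Fin.ext (hff i.1), fun j => Fin.ext (hff j.1)⟩, hlab, ?_⟩
  intro i j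
  constructor
  · rintro ⟨hij, hM⟩
    have hij' : (i : ℕ) < j := hij
    have hne : ¬((i : ℕ) = u.length ∧ (j : ℕ) = u.length + 1) := by
      rintro ⟨h1, h2⟩
      apply hM
      simp only [List.get_eq_getElem, h1, h2]
      rw [hgeta, hgetb]; exact hab
    refine ⟨key i.1 j.1 hij' hne, ?_⟩
    show M ((u ++ b :: a :: v).get ⟨f i.1, hb1 i.1 i.2⟩)
        ((u ++ b :: a :: v).get ⟨f j.1, hb1 j.1 j.2⟩) ≠ 2
    rw [← hlab i, ← hlab j]
    exact hM
  · rintro ⟨hij, hM⟩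
    have hij' : f i.1 < f j.1 := hij
    have hM0 : M ((u ++ b :: a :: v).get ⟨f i.1, hb1 i.1 i.2⟩)
        ((u ++ b :: a :: v).get ⟨f j.1, hb1 j.1 j.2⟩) ≠ 2 := hM
    have hM' : M ((u ++ a :: b :: v).get i) ((u ++ a :: b :: v).get j) ≠ 2 := by
      rw [hlab i, hlab j]; exact hM0
    have hne : ¬((i : ℕ) = u.length + 1 ∧ (j : ℕ) = u.length) := by
      rintro ⟨h1, h2⟩
      apply hM'
      simp only [List.get_eq_getElem, h1, h2]
      rw [hgetb, hgeta]
      exact (M.symmetric b a).trans hab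
    have hkey := key (f i.1) (f j.1) hij'
      (by rintro ⟨h1, h2⟩; exact hne ⟨hfk _ h1, hfk1 _ h2⟩)
    rw [hff, hff] at hkey
    exact ⟨hkey, hM'⟩

private lemma transGen_transfer {α β : Type*} (r : α → α → Prop) (r' : β → β → Prop)
    (e : α ≃ β) (h : ∀ i j, r i j ↔ r' (e i) (e j)) (i j : α) :
    Relation.TransGen r i j ↔ Relation.TransGen r' (e i) (e j) := by
  constructor
  · intro ht
    induction ht with
    | single hs => exact Relation.TransGen.single ((h _ _).1 hs)
    | tail _ hs ih => exact ih.tail ((h _ _).1 hs)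
  · intro ht
    have key : ∀ x y : β, Relation.TransGen r' x y →
        Relation.TransGen r (e.symm x) (e.symm y) := by
      intro x y hxy
      induction hxy with
      | single hs => exact Relation.TransGen.single ((h _ _).2 (by simpa using hs))
      | tail _ hs ih => exact ih.tail ((h _ _).2 (by simpa using hs))
    simpa using key _ _ ht

/-- If two reduced expressions `l, l'` of the same element are related by commutation moves
only, then the labeled heaps `H(l)` and `H(l')` are isomorphic as labeled posets: there is a
bijection of positions preserving the labels and the heap (partial) order. -/
theorem heap_well_defined_up_to_commutation {B W : Type*} [Group W]
    (M : CoxeterMatrix B) (cs : CoxeterSystem M W) (l l' : List B)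
    (hl : cs.IsReduced l) (hl' : cs.IsReduced l')
    (hprod : cs.wordProd l = cs.wordProd l')
    (hcomm : CommEquiv M l l') :
    ∃ e : Fin l.length ≃ Fin l'.length,
      (∀ i, l.get i = l'.get (e i)) ∧
      (∀ i j, Relation.TransGen (heapRel M l) i j ↔
        Relation.TransGen (heapRel M l') (e i) (e j)) := by
  clear hl hl' hprod
  induction hcomm with
  | refl => exact ⟨Equiv.refl _, fun i => rfl, fun i j => Iff.rfl⟩
  | tail _hstep hmv ih =>
    obtain ⟨e, hel, her⟩ := ih
    obtain ⟨f, hfl, hfr⟩ := commMove_iso M _ _ hmv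
    refine ⟨e.trans f, fun i => by rw [hel i, hfl (e i)]; rfl, fun i j => ?_⟩
    rw [her i j, transGen_transfer _ _ f hfr]
    rfl
end

section
/- For a fully commutative element w of a Coxeter group, the linear extensions of the heap H(w) are in bijection with the reduced expressions of w. -/
/-- Full commutativity. -/
def FullyCommutative {B W : Type*} [Group W] {M : CoxeterMatrix B}
    (cs : CoxeterSystem M W) (w : W) : Prop :=
  ∀ l l' : List B, cs.IsReduced l → cs.IsReduced l' →
    cs.wordProd l = w → cs.wordProd l' = w → CommEquiv M l l'

/-!
Reading the letters of `l` in the order of a linear extension `σ` of the heap gives a word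
commutation equivalent to `l`: sort `σ` into the identity by adjacent transpositions, each of
which exchanges two heap-incomparable, hence commuting, letters. Conversely, a commutation move
on the word read from `σ` exchanges two adjacent letters with `m = 2`, which are incomparable in
the heap, so it is the reading of another linear extension. Since `w` is fully commutative, its
reduced words are exactly the words commutation equivalent to `l`. Equal letters are comparable
in the heap, so a linear extension is recovered from the word it reads.
-/

open Relation

section Coxeter

variable {B W : Type*} {M : CoxeterMatrix B} [Group W] (cs : CoxeterSystem M W)

theorem CoxeterSystem.commute_simple_of_eq_two {a b : B} (h : M a b = 2) :
    Commute (cs.simple a) (cs.simple b) := by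
  rw [commute_iff_eq]
  simpa [CoxeterSystem.braidWord, CoxeterSystem.alternatingWord, h, M.symmetric b a,
    cs.wordProd_cons] using cs.wordProd_braidWord_eq a b

theorem CommMove.length_eq {l l' : List B} (h : CommMove M l l') : l.length = l'.length := by
  obtain ⟨u, v, a, b, -, rfl, rfl⟩ := h
  simp

theorem CommMove.wordProd_eq {l l' : List B} (h : CommMove M l l') :
    cs.wordProd l = cs.wordProd l' := by
  obtain ⟨u, v, a, b, hab, rfl, rfl⟩ := h
  simp only [cs.wordProd_append, cs.wordProd_cons, ← mul_assoc,
    (cs.commute_simple_of_eq_two hab).eq]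

theorem CommEquiv.length_eq {l l' : List B} (h : CommEquiv M l l') : l.length = l'.length := by
  induction h with
  | refl => rfl
  | tail _ hmove ih => exact ih.trans hmove.length_eq

theorem CommEquiv.wordProd_eq {l l' : List B} (h : CommEquiv M l l') :
    cs.wordProd l = cs.wordProd l' := by
  induction h with
  | refl => rfl
  | tail _ hmove ih => exact ih.trans (hmove.wordProd_eq cs)

theorem CommEquiv.isReduced {l l' : List B} (h : CommEquiv M l l') (hl : cs.IsReduced l) :
    cs.IsReduced l' := by
  rw [CoxeterSystem.IsReduced, ← h.wordProd_eq cs, ← h.length_eq]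
  exact hl

end Coxeter

section Perm

variable {n : ℕ}

theorem eq_one_or_exists_descent (σ : Equiv.Perm (Fin n)) :
    σ = 1 ∨ ∃ k, ∃ hk : k + 1 < n, σ.symm ⟨k + 1, hk⟩ < σ.symm ⟨k, by omega⟩ := by
  refine or_iff_not_imp_right.2 fun h => ?_
  push Not at h
  suffices hmono : StrictMono σ.symm by
    ext i
    simpa using (congrArg Fin.val (hmono.apply_eq (x := σ i))).symm
  cases n with
  | zero => exact fun i => i.elim0
  | succ m =>
    refine Fin.strictMono_iff_lt_succ.2 fun i => (h i i.succ.isLt).lt_of_ne ?_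
    simp [Fin.ext_iff]

def adjSwap (k : ℕ) (hk : k + 1 < n) : Equiv.Perm (Fin n) :=
  Equiv.swap ⟨k, by omega⟩ ⟨k + 1, hk⟩

variable {k : ℕ} (hk : k + 1 < n)

@[simp] theorem adjSwap_mul_self : adjSwap k hk * adjSwap k hk = 1 :=
  Equiv.swap_mul_self _ _

@[simp] theorem adjSwap_apply_left : adjSwap k hk ⟨k, by omega⟩ = ⟨k + 1, hk⟩ :=
  Equiv.swap_apply_left _ _

@[simp] theorem adjSwap_apply_right : adjSwap k hk ⟨k + 1, hk⟩ = ⟨k, by omega⟩ :=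
  Equiv.swap_apply_right _ _

@[simp] theorem adjSwap_mul_symm_apply (σ : Equiv.Perm (Fin n)) (j : Fin n) :
    (adjSwap k hk * σ).symm j = σ.symm (adjSwap k hk j) := by
  simp [Equiv.Perm.mul_def, adjSwap]

theorem adjSwap_apply_of_ne {j : Fin n} (h₁ : j.val ≠ k) (h₂ : j.val ≠ k + 1) :
    adjSwap k hk j = j :=
  Equiv.swap_apply_of_ne_of_ne (by simpa [Fin.ext_iff]) (by simpa [Fin.ext_iff])

theorem adjSwap_lt_adjSwap {a b : Fin n} (hab : a < b)
    (h : ¬(a = ⟨k, by omega⟩ ∧ b = ⟨k + 1, hk⟩)) : adjSwap k hk a < adjSwap k hk b := by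
  rcases a with ⟨a, ha⟩
  rcases b with ⟨b, hb⟩
  simp only [adjSwap, Equiv.swap_apply_def, Fin.lt_def, Fin.mk.injEq] at *
  split_ifs <;> simp_all <;> omega

def inversions (σ : Equiv.Perm (Fin n)) : Finset (Fin n × Fin n) :=
  Finset.univ.filter fun p => p.1 < p.2 ∧ σ p.2 < σ p.1

theorem card_inversions_adjSwap_mul_lt {σ : Equiv.Perm (Fin n)}
    (hdesc : σ.symm ⟨k + 1, hk⟩ < σ.symm ⟨k, by omega⟩) :
    (inversions (adjSwap k hk * σ)).card < (inversions σ).card := by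
  have hsub : inversions (adjSwap k hk * σ) ⊆ inversions σ := by
    intro p hp
    simp only [inversions, Finset.mem_filter, Finset.mem_univ, true_and] at hp ⊢
    obtain ⟨hp, hswap⟩ := hp
    rw [Equiv.Perm.mul_apply, Equiv.Perm.mul_apply] at hswap
    refine ⟨hp, lt_of_not_ge fun hle => ?_⟩
    have hlt : σ p.1 < σ p.2 := hle.lt_of_ne (σ.injective.ne hp.ne)
    by_cases hadj : σ p.1 = ⟨k, by omega⟩ ∧ σ p.2 = ⟨k + 1, hk⟩
    · rw [← Equiv.eq_symm_apply, ← Equiv.eq_symm_apply] at hadj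
      exact hdesc.not_gt (hadj.1 ▸ hadj.2 ▸ hp)
    · exact (adjSwap_lt_adjSwap hk hlt hadj).not_gt hswap
  refine Finset.card_lt_card <| (Finset.ssubset_iff_of_subset hsub).2
    ⟨(σ.symm ⟨k + 1, hk⟩, σ.symm ⟨k, by omega⟩), ?_, ?_⟩
  · simp [inversions, hdesc]
  · simp only [inversions, Finset.mem_filter]
    simp

end Perm

section LinearExtension

variable {n : ℕ}

def IsLinearExtension (r : Fin n → Fin n → Prop) (σ : Equiv.Perm (Fin n)) : Prop :=
  ∀ i j, r i j → σ i < σ j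

variable {r : Fin n → Fin n → Prop} {σ τ : Equiv.Perm (Fin n)}

theorem IsLinearExtension.adjSwap_mul (hσ : IsLinearExtension r σ) {k : ℕ} (hk : k + 1 < n)
    (h : ¬r (σ.symm ⟨k, by omega⟩) (σ.symm ⟨k + 1, hk⟩)) :
    IsLinearExtension r (adjSwap k hk * σ) := by
  refine fun i j hij => adjSwap_lt_adjSwap hk (hσ i j hij) ?_
  rintro ⟨hi, hj⟩
  rw [← Equiv.eq_symm_apply] at hi hj
  exact h (hi ▸ hj ▸ hij)

theorem IsLinearExtension.rel_of_transGen (hσ : IsLinearExtension (TransGen r) σ)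
    {i j : Fin n} (hij : TransGen r i j) (hadj : (σ j : ℕ) = σ i + 1) : r i j := by
  cases hij with
  | single h => exact h
  | tail him hmj =>
    have h1 := hσ _ _ him
    have h2 := hσ _ _ (.single hmj)
    rw [Fin.lt_def] at h1 h2
    omega

theorem IsLinearExtension.eq_of_comp_symm_eq {β : Type*} {f : Fin n → β}
    (hr : ∀ i j, i < j → f i = f j → r i j)
    (hσ : IsLinearExtension r σ) (hτ : IsLinearExtension r τ)
    (h : f ∘ σ.symm = f ∘ τ.symm) : σ = τ := by
  -- Strong induction on the reading position `m`: the letters read at `m` agree, and `hr` forces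
  -- them to come from the same position of the word.
  have not_lt_of_agree_below : ∀ {σ τ : Equiv.Perm (Fin n)} {m : Fin n}, IsLinearExtension r τ →
      f (σ.symm m) = f (τ.symm m) → (∀ m' < m, σ.symm m' = τ.symm m') →
      ¬σ.symm m < τ.symm m := by
    intro σ τ m hτ hf ih hlt
    have hm : τ (σ.symm m) < m := by simpa using hτ _ _ (hr _ _ hlt hf)
    have hfix : τ (σ.symm m) = m := by simpa using ih _ hm
    exact hm.ne hfix
  refine Equiv.symm_bijective.injective (Equiv.ext fun m => ?_)
  induction m using WellFoundedLT.induction with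
  | _ m ih =>
    have hf : f (σ.symm m) = f (τ.symm m) := congrFun h m
    exact le_antisymm (not_lt.1 (not_lt_of_agree_below hσ hf.symm fun m' hm' => (ih m' hm').symm))
      (not_lt.1 (not_lt_of_agree_below hτ hf ih))

end LinearExtension

section Words

theorem List.ofFn_eq_take_append_cons_cons {α : Type*} {n k : ℕ} (f : Fin n → α)
    (hk : k + 1 < n) :
    List.ofFn f = (List.ofFn f).take k ++ f ⟨k, by omega⟩ :: f ⟨k + 1, hk⟩ ::
      (List.ofFn f).drop (k + 2) := by
  have h1 := List.getElem_ofFn (f := f) (i := k) (by simp; omega)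
  have h2 := List.getElem_ofFn (f := f) (i := k + 1) (by simp; omega)
  rw [← h1, ← h2, List.cons_getElem_drop_succ, List.cons_getElem_drop_succ, List.take_append_drop]

theorem List.ofFn_comp_adjSwap {α : Type*} {n k : ℕ} {f : Fin n → α} {u v : List α} {a x : α}
    (h : List.ofFn f = u ++ a :: x :: v) (hu : u.length = k) (hk : k + 1 < n) :
    List.ofFn (f ∘ adjSwap k hk) = u ++ x :: a :: v := by
  subst hu
  have hlen : n = u.length + v.length + 2 := by
    simpa [Nat.add_assoc] using congrArg List.length h
  have hf : ∀ j : Fin n, f j = (u ++ a :: x :: v)[j.val]'(by simp; omega) := fun j => by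
    simp [← h]
  refine List.ext_getElem (by simp; omega) fun m h1 h2 => ?_
  rw [List.getElem_ofFn, Function.comp_apply, hf]
  obtain hm | rfl | rfl | hm :
      m < u.length ∨ m = u.length ∨ m = u.length + 1 ∨ u.length + 2 ≤ m := by omega
  · rw [adjSwap_apply_of_ne hk (by simp; omega) (by simp; omega)]
    simp [List.getElem_append_left hm]
  · simp [adjSwap]
  · simp [adjSwap]
  · rw [adjSwap_apply_of_ne hk (by simp; omega) (by simp; omega)]
    obtain ⟨d, rfl⟩ : ∃ d, m = u.length + (d + 2) := ⟨m - u.length - 2, by omega⟩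
    simp [List.getElem_append_right]

end Words

section Heap

def readWord {B : Type*} (l : List B) (σ : Equiv.Perm (Fin l.length)) : List B :=
  List.ofFn fun k => l.get (σ.symm k)

variable {B : Type*} {M : CoxeterMatrix B} {l l' : List B} {σ : Equiv.Perm (Fin l.length)}

@[simp] theorem readWord_one : readWord l 1 = l := by
  simp [readWord, Equiv.Perm.one_def]

theorem readWord_adjSwap_mul {k : ℕ} (hk : k + 1 < l.length) :
    readWord l (adjSwap k hk * σ) = List.ofFn ((fun j => l.get (σ.symm j)) ∘ adjSwap k hk) := by
  simp [readWord, Function.comp_def]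

theorem commMove_readWord_adjSwap_mul {k : ℕ} (hk : k + 1 < l.length)
    (h : M (l.get (σ.symm ⟨k, by omega⟩)) (l.get (σ.symm ⟨k + 1, hk⟩)) = 2) :
    CommMove M (readWord l σ) (readWord l (adjSwap k hk * σ)) := by
  have hsplit := List.ofFn_eq_take_append_cons_cons (fun j => l.get (σ.symm j)) hk
  refine ⟨_, _, _, _, h, hsplit, ?_⟩
  rw [readWord_adjSwap_mul, List.ofFn_comp_adjSwap hsplit (by simp; omega)]

theorem lt_of_transGen_heapRel {i j : Fin l.length} (h : TransGen (heapRel M l) i j) : i < j := by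
  induction h with
  | single h => exact h.1
  | tail _ h ih => exact ih.trans h.1

theorem heapRel_of_get_eq {i j : Fin l.length} (hij : i < j) (h : l.get i = l.get j) :
    heapRel M l i j :=
  ⟨hij, by rw [h, M.diagonal]; decide⟩

theorem commEquiv_readWord (hσ : IsLinearExtension (TransGen (heapRel M l)) σ) :
    CommEquiv M l (readWord l σ) := by
  -- Bubble sort: an adjacent descent of `σ⁻¹` is a pair of heap-incomparable, hence commuting,
  -- letters, and undoing it removes one inversion.
  induction hN : (inversions σ).card using Nat.strong_induction_on generalizing σ with
  | _ N ih =>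
  obtain rfl | ⟨k, hk, hdesc⟩ := eq_one_or_exists_descent σ
  · rw [readWord_one]
    exact .refl
  have hM : M (l.get (σ.symm ⟨k + 1, hk⟩)) (l.get (σ.symm ⟨k, by omega⟩)) = 2 := by
    by_contra hM
    have := hσ _ _ (.single ⟨hdesc, hM⟩)
    simp [Fin.lt_def] at this
  have hσ' : IsLinearExtension (TransGen (heapRel M l)) (adjSwap k hk * σ) :=
    hσ.adjSwap_mul hk fun h => (lt_of_transGen_heapRel h).not_gt hdesc
  refine (ih _ (hN ▸ card_inversions_adjSwap_mul_lt hk hdesc) hσ' rfl).tail ?_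
  simpa [← mul_assoc] using commMove_readWord_adjSwap_mul (σ := adjSwap k hk * σ) hk
    (by simpa using hM)

theorem exists_readWord_eq_of_commEquiv (h : CommEquiv M l l') :
    ∃ σ, IsLinearExtension (TransGen (heapRel M l)) σ ∧ readWord l σ = l' := by
  induction h with
  | refl => exact ⟨1, fun _ _ => lt_of_transGen_heapRel, readWord_one⟩
  | tail _ hmove ih =>
    obtain ⟨σ, hσ, rfl⟩ := ih
    obtain ⟨u, v, a, x, hax, hword, rfl⟩ := hmove
    have hk : u.length + 1 < l.length := by
      have := congrArg List.length hword
      simp only [readWord, List.length_ofFn, List.length_append, List.length_cons] at this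
      omega
    have hletter (j : Fin l.length) :
        l.get (σ.symm j) = (readWord l σ)[j.val]'(by simp [readWord]) := by
      simp [readWord]
    refine ⟨adjSwap u.length hk * σ, hσ.adjSwap_mul hk fun h => ?_, ?_⟩
    · refine (hσ.rel_of_transGen h (by simp)).2 ?_
      rw [hletter, hletter]
      simpa [hword] using hax
    · rw [readWord_adjSwap_mul, List.ofFn_comp_adjSwap hword rfl]

theorem readWord_injOn :
    Set.InjOn (readWord l) {σ | IsLinearExtension (TransGen (heapRel M l)) σ} :=
  fun _ hσ _ hτ h =>
    hσ.eq_of_comp_symm_eq (fun _ _ hij hl => .single (heapRel_of_get_eq hij hl)) hτ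
      (List.ofFn_injective h)

end Heap

/-- For a fully commutative element `w` with heap `H(w) = H(l)` (any reduced word `l` of `w`),
the linear extensions of `H(w)` are in bijection with the reduced expressions of `w`:
a linear extension `σ` (a permutation of positions compatible with the heap order)
corresponds to the word obtained by reading the labels in the order given by `σ`. -/
theorem linearExtensions_equiv_reducedWords {B W : Type*} [Group W]
    (M : CoxeterMatrix B) (cs : CoxeterSystem M W) (w : W)
    (hw : FullyCommutative cs w)
    (l : List B) (hl : cs.IsReduced l) (hlw : cs.wordProd l = w) :
    ∃ f : {σ : Equiv.Perm (Fin l.length) //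
            ∀ i j, Relation.TransGen (heapRel M l) i j → σ i < σ j} ≃
          {l' : List B // cs.IsReduced l' ∧ cs.wordProd l' = w},
      ∀ σ, (f σ : List B) = List.ofFn (fun k => l.get (σ.val.symm k)) := by
  let f : {σ // IsLinearExtension (TransGen (heapRel M l)) σ} →
      {l' : List B // cs.IsReduced l' ∧ cs.wordProd l' = w} := fun σ =>
    ⟨readWord l σ, (commEquiv_readWord σ.2).isReduced cs hl,
      (commEquiv_readWord σ.2).wordProd_eq cs ▸ hlw⟩
  refine ⟨Equiv.ofBijective f ⟨fun σ τ h => Subtype.ext ?_, fun l' => ?_⟩, fun σ => rfl⟩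
  · exact readWord_injOn σ.2 τ.2 (congrArg Subtype.val h)
  · obtain ⟨σ, hσ, hword⟩ := exists_readWord_eq_of_commEquiv (hw l l' hl l'.2.1 hlw l'.2.2)
    exact ⟨⟨σ, hσ⟩, Subtype.ext hword⟩
end
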